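/- arXiv:2109.01470 — 5 statements merged into one kernel-verified Lean document; each statement's English description precedes it below -/
import Mathlib

section
/- For every V-module W and every V-bilinear map μ : W × W → W, the map ι : Ω^ev(W) → T W is a bijective V-linear map; that is, ι is an isomorphism of V-modules from the even-degree noncommutative differential forms onto the non-unital tensor algebra of W. -/
/-!
Statement 0. `V` is a discrete valuation ring with uniformiser `π`.  For a `V`-module `W`,
`T W := ⊕_{n≥1} W^{⊗n}` is the non-unital tensor algebra; we realise it as the kernel of the
augmentation `TensorAlgebra V W → V`.  `W⁺ := V ⊕ W`, `Ω⁰(W) := W`,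
`Ω^{2l}(W) := W⁺ ⊗ W^{⊗2l}` (the even tensor power `W^{⊗2l}` being encoded as
`(W ⊗ W)^{⊗ l}`), and `Ω^{ev}(W) := ⊕_{l≥0} Ω^{2l}(W)`.  Given a `V`-bilinear
`μ : W × W → W`, the map `ι : Ω^{ev}(W) → T W` sends
`x₀ dx₁ ⋯ dx_{2l}` to `x₀ ⊗ (μ(x₁,x₂) − x₁⊗x₂) ⊗ ⋯ ⊗ (μ(x_{2l−1},x_{2l}) − x_{2l−1}⊗x_{2l})`.
The claim: `ι` is an isomorphism of `V`-modules from `Ω^{ev}(W)` onto `T W`, i.e. it is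
injective with range the augmentation ideal.
-/

open scoped TensorProduct DirectSum

noncomputable section

variable (V : Type) [CommRing V] [IsDomain V] [IsDiscreteValuationRing V]
variable (W : Type) [AddCommGroup W] [Module V W]
variable (μ : W →ₗ[V] W →ₗ[V] W)

/-- The map `W ⊗ W → TensorAlgebra V W`, `x ⊗ y ↦ μ(x,y) − x ⊗ y`. -/
def fedosovD : W ⊗[V] W →ₗ[V] TensorAlgebra V W :=
  TensorProduct.lift
    (μ.compr₂ (TensorAlgebra.ι V) -
      (LinearMap.mul V (TensorAlgebra V W)).compl₁₂ (TensorAlgebra.ι V) (TensorAlgebra.ι V))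

/-- The product of `l` factors `μ(x_{2i−1},x_{2i}) − x_{2i−1} ⊗ x_{2i}` in the tensor
algebra, as a linear map on `W^{⊗2l} = (W ⊗ W)^{⊗l}`. -/
def fedosovProd (l : ℕ) : (⨂[V]^l (W ⊗[V] W)) →ₗ[V] TensorAlgebra V W :=
  PiTensorProduct.lift
    ((MultilinearMap.mkPiAlgebraFin V l (TensorAlgebra V W)).compLinearMap
      fun _ => fedosovD V W μ)

/-- `W⁺ = V ⊕ W` mapped into the unital tensor algebra, `(a, w) ↦ a·1 + w`. -/
def wplusToTA : (V × W) →ₗ[V] TensorAlgebra V W :=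
  (Algebra.linearMap V (TensorAlgebra V W)).comp (LinearMap.fst V V W) +
    (TensorAlgebra.ι V).comp (LinearMap.snd V V W)

/-- `Ω^{2(l+1)}(W) = W⁺ ⊗ W^{⊗2(l+1)}`, with `W^{⊗2(l+1)}` encoded as `(W⊗W)^{⊗(l+1)}`. -/
abbrev OmegaTwo (l : ℕ) := (V × W) ⊗[V] (⨂[V]^(l + 1) (W ⊗[V] W))

/-- `Ω^{ev}(W) = Ω⁰(W) × ⨁_{l≥1} Ω^{2l}(W)`, where `Ω⁰(W) = W`. -/
abbrev OmegaEv := W × (⨁ l : ℕ, OmegaTwo V W l)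

/-- The component `ι : Ω^{2(l+1)}(W) → TensorAlgebra V W`,
`x₀ dx₁ ⋯ dx_{2l+2} ↦ x₀ ⊗ ∏ (μ(x,x') − x⊗x')`. -/
def iotaTwo (l : ℕ) : OmegaTwo V W l →ₗ[V] TensorAlgebra V W :=
  TensorProduct.lift
    ((LinearMap.mul V (TensorAlgebra V W)).compl₁₂ (wplusToTA V W) (fedosovProd V W μ (l + 1)))

/-- The map `ι : Ω^{ev}(W) → TensorAlgebra V W`, with image inside the non-unital tensor
algebra `T W` (the augmentation ideal). -/
def iotaEv : OmegaEv V W →ₗ[V] TensorAlgebra V W :=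
  (TensorAlgebra.ι V).comp (LinearMap.fst V _ _) +
    (DirectSum.toModule V ℕ (TensorAlgebra V W) fun l => iotaTwo V W μ l).comp
      (LinearMap.snd V _ _)

/-- The augmentation `TensorAlgebra V W → V`; its kernel is `T W = ⊕_{n≥1} W^{⊗n}`. -/
def augmentation : TensorAlgebra V W →ₐ[V] V := TensorAlgebra.lift V (0 : W →ₗ[V] V)

/-!
The inverse of `ι` is written down explicitly. Put `ψ₁(x) = x`, `ψ₂(x ⊗ y) = μ(x,y) − dx dy` and
`ψₙ₊₂(t ⊗ x ⊗ y) = ψₙ₊₁(t ⊗ μ(x,y)) − ψₙ(t) dx dy` for `t ∈ W^{⊗n}`, `n ≥ 1`. Since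
`ι(ω dx dy) = ι(ω)·(μ(x,y) − x ⊗ y)`, induction on `n` gives `ι ∘ ψₙ = (W^{⊗n} ↪ T W)`.
Conversely, `x₀ = ψ₁(x₀)`, `dx dy = ψ₁(μ(x,y)) − ψ₂(x ⊗ y)`, and the recursion read backwards
writes `ψₙ(t) dx dy` through values of `ψ`; so, building `x₀ dx₁ ⋯ dx₂ₗ` one factor `dx dy` at a
time, `Ψ = ⊕ ψₙ` (with `ψ₀ = 0`) maps onto `Ω^{ev}(W)`. Hence `Ψ ∘ ι = id`, and on the tensor
algebra `ι ∘ Ψ = id − ε`, where `ε` is the augmentation followed by the unit.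
-/

namespace TensorPower

variable {R N : Type*} [CommSemiring R] [AddCommMonoid N] [Module R N]

theorem toTensorAlgebra_mulEquiv {n m : ℕ} (a : ⨂[R]^n N) (b : ⨂[R]^m N) :
    toTensorAlgebra (mulEquiv (a ⊗ₜ[R] b)) = toTensorAlgebra a * toTensorAlgebra b := by
  rw [← gMul_def, toTensorAlgebra_gMul]

theorem toTensorAlgebra_algebraMap₀ (r : R) :
    toTensorAlgebra (algebraMap₀ r : ⨂[R]^0 N) = algebraMap R _ r := by
  rw [algebraMap₀_eq_smul_one, map_smul, toTensorAlgebra_gOne, Algebra.algebraMap_eq_smul_one]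

variable (R N) in
def oneEquiv : N ≃ₗ[R] ⨂[R]^1 N :=
  (PiTensorProduct.subsingletonEquiv (s := fun _ : Fin 1 => N) 0).symm

theorem toTensorAlgebra_oneEquiv (x : N) :
    toTensorAlgebra (oneEquiv R N x) = TensorAlgebra.ι R x := by
  simp [oneEquiv]

variable (R N) in
def snocEquiv (n : ℕ) : ⨂[R]^n N ⊗[R] N ≃ₗ[R] ⨂[R]^(n + 1) N :=
  (TensorProduct.congr (LinearEquiv.refl R _) (oneEquiv R N)).trans mulEquiv

theorem toTensorAlgebra_snocEquiv {n : ℕ} (t : ⨂[R]^n N) (x : N) :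
    toTensorAlgebra (snocEquiv R N n (t ⊗ₜ x)) = toTensorAlgebra t * TensorAlgebra.ι R x := by
  simp [snocEquiv, toTensorAlgebra_mulEquiv, toTensorAlgebra_oneEquiv]

variable (R N) in
def snocTwoEquiv (n : ℕ) : ⨂[R]^n N ⊗[R] (N ⊗[R] N) ≃ₗ[R] ⨂[R]^(n + 2) N :=
  (TensorProduct.assoc R _ N N).symm.trans
    ((TensorProduct.congr (snocEquiv R N n) (LinearEquiv.refl R N)).trans (snocEquiv R N (n + 1)))

theorem toTensorAlgebra_snocTwoEquiv {n : ℕ} (t : ⨂[R]^n N) (x y : N) :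
    toTensorAlgebra (snocTwoEquiv R N n (t ⊗ₜ (x ⊗ₜ y))) =
      toTensorAlgebra t * TensorAlgebra.ι R x * TensorAlgebra.ι R y := by
  simp [snocTwoEquiv, toTensorAlgebra_snocEquiv]

variable (R N) in
def twoEquiv : N ⊗[R] N ≃ₗ[R] ⨂[R]^2 N :=
  (TensorProduct.congr (oneEquiv R N) (LinearEquiv.refl R N)).trans (snocEquiv R N 1)

theorem toTensorAlgebra_twoEquiv (x y : N) :
    toTensorAlgebra (twoEquiv R N (x ⊗ₜ y)) = TensorAlgebra.ι R x * TensorAlgebra.ι R y := by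
  simp [twoEquiv, toTensorAlgebra_snocEquiv, toTensorAlgebra_oneEquiv]

theorem lift_mkPiAlgebraFin_compLinearMap {A : Type*} [Semiring A] [Algebra R A]
    (g : N →ₗ[R] A) (n : ℕ) :
    PiTensorProduct.lift ((MultilinearMap.mkPiAlgebraFin R n A).compLinearMap fun _ => g) =
      (TensorAlgebra.lift R g).toLinearMap ∘ₗ toTensorAlgebra := by
  ext p
  simp [MultilinearMap.mkPiAlgebraFin_apply, map_list_prod, List.map_ofFn, Function.comp_def]

end TensorPower

theorem TensorAlgebra.ofDirectSum_of {R N : Type*} [CommSemiring R] [AddCommMonoid N]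
    [Module R N] {n : ℕ} (t : ⨂[R]^n N) :
    ofDirectSum (DirectSum.of _ n t) = TensorPower.toTensorAlgebra t :=
  DirectSum.toAddMonoid_of _ _ _

theorem TensorProduct.range_le_of_forall_tmul_mem {R A B P : Type*} [CommSemiring R]
    [AddCommMonoid A] [AddCommMonoid B] [AddCommMonoid P] [Module R A] [Module R B] [Module R P]
    (f : A ⊗[R] B →ₗ[R] P) {S : Submodule R P} (h : ∀ a b, f (a ⊗ₜ b) ∈ S) :
    LinearMap.range f ≤ S := by
  rw [LinearMap.range_eq_map, ← span_tmul_eq_top, Submodule.map_span_le]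
  rintro _ ⟨a, b, rfl⟩
  exact h a b

section Fedosov

variable {R : Type} [CommRing R] {M : Type} [AddCommGroup M] [Module R M]
variable (μ : M →ₗ[R] M →ₗ[R] M)

-- Without this instance, linear maps into `OmegaEv R M` get no `AddCommGroup` structure
-- from instance search.
instance (l : ℕ) : AddCommGroup (OmegaTwo R M l) := inferInstance

namespace OmegaEv

variable (R M)

def incl (l : ℕ) : OmegaTwo R M l →ₗ[R] OmegaEv R M :=
  LinearMap.inr R M _ ∘ₗ DirectSum.lof R ℕ (OmegaTwo R M) l

/-- `x ⊗ y ↦ dx dy` (the form with `x₀ = 1`). -/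
def dd : M ⊗[R] M →ₗ[R] OmegaEv R M :=
  incl R M 0 ∘ₗ TensorProduct.mk R _ _ (1, 0) ∘ₗ (TensorPower.oneEquiv R (M ⊗[R] M)).toLinearMap

/-- `ω ↦ (x ⊗ y ↦ ω dx dy)`. -/
def mulDD : OmegaEv R M →ₗ[R] M ⊗[R] M →ₗ[R] OmegaEv R M :=
  LinearMap.coprod
    (TensorProduct.curry (incl R M 0 ∘ₗ
      TensorProduct.map (LinearMap.inr R R M) (TensorPower.oneEquiv R (M ⊗[R] M)).toLinearMap))
    (DirectSum.toModule R ℕ _ fun l => TensorProduct.curry (incl R M (l + 1) ∘ₗ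
      (TensorPower.snocEquiv R (M ⊗[R] M) (l + 1)).toLinearMap.lTensor (R × M) ∘ₗ
      (TensorProduct.assoc R _ _ _).toLinearMap))

variable {R M}

theorem mulDD_inl (w : M) (ξ : M ⊗[R] M) :
    mulDD R M (LinearMap.inl R M _ w) ξ =
      incl R M 0 ((0, w) ⊗ₜ TensorPower.oneEquiv R (M ⊗[R] M) ξ) := by
  simp [mulDD]

theorem mulDD_incl_tmul (l : ℕ) (x : R × M) (τ : ⨂[R]^(l + 1) (M ⊗[R] M)) (ξ : M ⊗[R] M) :
    mulDD R M (incl R M l (x ⊗ₜ τ)) ξ =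
      incl R M (l + 1) (x ⊗ₜ TensorPower.snocEquiv R _ _ (τ ⊗ₜ ξ)) := by
  simp [mulDD, incl]

end OmegaEv

open OmegaEv

theorem fedosovProd_oneEquiv (ξ : M ⊗[R] M) :
    fedosovProd R M μ 1 (TensorPower.oneEquiv R _ ξ) = fedosovD R M μ ξ := by
  simp [fedosovProd, TensorPower.lift_mkPiAlgebraFin_compLinearMap,
    TensorPower.toTensorAlgebra_oneEquiv]

theorem fedosovProd_snocEquiv (n : ℕ) (τ : ⨂[R]^n (M ⊗[R] M)) (ξ : M ⊗[R] M) :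
    fedosovProd R M μ (n + 1) (TensorPower.snocEquiv R _ n (τ ⊗ₜ ξ)) =
      fedosovProd R M μ n τ * fedosovD R M μ ξ := by
  simp [fedosovProd, TensorPower.lift_mkPiAlgebraFin_compLinearMap,
    TensorPower.toTensorAlgebra_snocEquiv]

theorem fedosovD_tmul (x y : M) :
    fedosovD R M μ (x ⊗ₜ y) =
      TensorAlgebra.ι R (μ x y) - TensorAlgebra.ι R x * TensorAlgebra.ι R y := by
  simp [fedosovD]

theorem iotaEv_inl (w : M) : iotaEv R M μ (LinearMap.inl R M _ w) = TensorAlgebra.ι R w := by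
  simp [iotaEv]

theorem iotaEv_dd (ξ : M ⊗[R] M) : iotaEv R M μ (dd R M ξ) = fedosovD R M μ ξ := by
  simp [iotaEv, dd, incl, iotaTwo, wplusToTA, fedosovProd_oneEquiv]

theorem iotaEv_mulDD (ω : OmegaEv R M) (ξ : M ⊗[R] M) :
    iotaEv R M μ (mulDD R M ω ξ) = iotaEv R M μ ω * fedosovD R M μ ξ := by
  suffices (mulDD R M).compr₂ (iotaEv R M μ) =
      (LinearMap.mul R _).compl₁₂ (iotaEv R M μ) (fedosovD R M μ) from
    LinearMap.congr_fun₂ this ω ξ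
  ext
  all_goals simp [mulDD, iotaEv, iotaTwo, incl, wplusToTA, fedosovProd_snocEquiv,
    fedosovProd_oneEquiv, mul_assoc]

def psi : ∀ n : ℕ, ⨂[R]^n M →ₗ[R] OmegaEv R M
  | 0 => 0
  | 1 => LinearMap.inl R M _ ∘ₗ (TensorPower.oneEquiv R M).symm.toLinearMap
  | 2 => (LinearMap.inl R M _ ∘ₗ TensorProduct.lift μ - dd R M) ∘ₗ
      (TensorPower.twoEquiv R M).symm.toLinearMap
  | n + 3 =>
    (TensorProduct.lift (((TensorProduct.mk R _ M).compl₂ (TensorProduct.lift μ)).compr₂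
        (psi (n + 2) ∘ₗ (TensorPower.snocEquiv R M (n + 1)).toLinearMap)) -
      TensorProduct.lift (mulDD R M ∘ₗ psi (n + 1))) ∘ₗ
      (TensorPower.snocTwoEquiv R M (n + 1)).symm.toLinearMap

theorem psi_oneEquiv (w : M) : psi μ 1 (TensorPower.oneEquiv R M w) = LinearMap.inl R M _ w := by
  simp [psi]

theorem psi_twoEquiv (ξ : M ⊗[R] M) :
    psi μ 2 (TensorPower.twoEquiv R M ξ) =
      LinearMap.inl R M _ (TensorProduct.lift μ ξ) - dd R M ξ := by
  simp [psi]

theorem psi_snocTwoEquiv (n : ℕ) (t : ⨂[R]^(n + 1) M) (ξ : M ⊗[R] M) :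
    psi μ (n + 3) (TensorPower.snocTwoEquiv R M (n + 1) (t ⊗ₜ ξ)) =
      psi μ (n + 2) (TensorPower.snocEquiv R M (n + 1) (t ⊗ₜ TensorProduct.lift μ ξ)) -
        mulDD R M (psi μ (n + 1) t) ξ := by
  simp [psi]

theorem iotaEv_comp_psi : ∀ n : ℕ,
    iotaEv R M μ ∘ₗ psi μ (n + 1) = TensorPower.toTensorAlgebra
  | 0 => by
    change iotaEv R M μ ∘ₗ psi μ 1 = _
    refine (LinearEquiv.eq_comp_toLinearMap_iff (e₁₂ := TensorPower.oneEquiv R M) ..).1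
      (LinearMap.ext fun w => ?_)
    simp only [LinearMap.comp_apply, LinearEquiv.coe_coe, psi_oneEquiv, iotaEv_inl,
      TensorPower.toTensorAlgebra_oneEquiv]
  | 1 => by
    change iotaEv R M μ ∘ₗ psi μ 2 = _
    refine (LinearEquiv.eq_comp_toLinearMap_iff (e₁₂ := TensorPower.twoEquiv R M) ..).1
      (TensorProduct.ext' fun x y => ?_)
    simp only [LinearMap.comp_apply, LinearEquiv.coe_coe, psi_twoEquiv, map_sub, iotaEv_inl,
      iotaEv_dd, fedosovD_tmul, TensorProduct.lift.tmul, TensorPower.toTensorAlgebra_twoEquiv,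
      sub_sub_cancel]
  | n + 2 => by
    have h₁ : ∀ t, iotaEv R M μ (psi μ (n + 1) t) = TensorPower.toTensorAlgebra t :=
      LinearMap.congr_fun (iotaEv_comp_psi n)
    have h₂ : ∀ t, iotaEv R M μ (psi μ (n + 2) t) = TensorPower.toTensorAlgebra t :=
      LinearMap.congr_fun (iotaEv_comp_psi (n + 1))
    refine (LinearEquiv.eq_comp_toLinearMap_iff
      (e₁₂ := TensorPower.snocTwoEquiv R M (n + 1)) ..).1
      (TensorProduct.ext (LinearMap.ext fun t => TensorProduct.ext' fun x y => ?_))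
    simp [psi_snocTwoEquiv, iotaEv_mulDD, h₁, h₂, TensorPower.toTensorAlgebra_snocTwoEquiv,
      TensorPower.toTensorAlgebra_snocEquiv, fedosovD_tmul, mul_sub, _root_.mul_assoc]

def psiSum : (⨁ n, ⨂[R]^n M) →ₗ[R] OmegaEv R M := DirectSum.toModule R ℕ _ (psi μ)

theorem psi_mem_range_psiSum (n : ℕ) (t : ⨂[R]^n M) : psi μ n t ∈ LinearMap.range (psiSum μ) :=
  ⟨DirectSum.lof R ℕ _ n t, DirectSum.toModule_lof ..⟩

theorem inl_mem_range_psiSum (w : M) : LinearMap.inl R M _ w ∈ LinearMap.range (psiSum μ) :=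
  psi_oneEquiv μ w ▸ psi_mem_range_psiSum μ 1 _

theorem dd_mem_range_psiSum (ξ : M ⊗[R] M) : dd R M ξ ∈ LinearMap.range (psiSum μ) := by
  rw [← sub_sub_cancel (LinearMap.inl R M _ (TensorProduct.lift μ ξ)) (dd R M ξ),
    ← psi_twoEquiv μ, ← psi_oneEquiv μ]
  exact sub_mem (psi_mem_range_psiSum ..) (psi_mem_range_psiSum ..)

theorem mulDD_mem_range_psiSum {ω : OmegaEv R M} (hω : ω ∈ LinearMap.range (psiSum μ))
    (ξ : M ⊗[R] M) : mulDD R M ω ξ ∈ LinearMap.range (psiSum μ) := by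
  obtain ⟨D, rfl⟩ := hω
  induction D using DirectSum.induction_on with
  | zero => simp
  | of n t =>
    rw [← DirectSum.lof_eq_of R, psiSum, DirectSum.toModule_lof]
    cases n with
    | zero => simp [psi]
    | succ n =>
      rw [← sub_sub_cancel (psi μ (n + 2) _) (mulDD R M (psi μ (n + 1) t) ξ), ← psi_snocTwoEquiv]
      exact sub_mem (psi_mem_range_psiSum ..) (psi_mem_range_psiSum ..)
  | add D₁ D₂ h₁ h₂ =>
    rw [map_add, map_add, LinearMap.add_apply]
    exact add_mem h₁ h₂

theorem range_incl_le_range_psiSum :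
    ∀ l : ℕ, LinearMap.range (incl R M l) ≤ LinearMap.range (psiSum μ)
  | 0 => TensorProduct.range_le_of_forall_tmul_mem _ fun x τ => by
    obtain ⟨ξ, rfl⟩ := (TensorPower.oneEquiv R (M ⊗[R] M)).surjective τ
    have hx : x = x.1 • ((1 : R), (0 : M)) + (0, x.2) := by ext <;> simp
    rw [hx, TensorProduct.add_tmul, ← TensorProduct.smul_tmul', map_add, map_smul, ← mulDD_inl]
    exact add_mem (Submodule.smul_mem _ _ (dd_mem_range_psiSum μ ξ))
      (mulDD_mem_range_psiSum μ (inl_mem_range_psiSum μ x.2) ξ)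
  | l + 1 => TensorProduct.range_le_of_forall_tmul_mem _ fun x τ => by
    obtain ⟨s, rfl⟩ := (TensorPower.snocEquiv R (M ⊗[R] M) (l + 1)).surjective τ
    refine TensorProduct.range_le_of_forall_tmul_mem
      (incl R M (l + 1) ∘ₗ TensorProduct.mk R _ _ x ∘ₗ (TensorPower.snocEquiv R _ _).toLinearMap)
      (fun σ ξ => ?_) ⟨s, rfl⟩
    simp only [LinearMap.comp_apply, TensorProduct.mk_apply, LinearEquiv.coe_coe,
      ← mulDD_incl_tmul]
    exact mulDD_mem_range_psiSum μ (range_incl_le_range_psiSum l ⟨_, rfl⟩) ξ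

theorem psiSum_surjective : Function.Surjective (psiSum μ) := by
  rw [← LinearMap.range_eq_top, eq_top_iff]
  rintro ⟨w, d⟩ -
  rw [show ((w, d) : OmegaEv R M) = LinearMap.inl R M _ w + (0, d) by simp]
  refine add_mem (inl_mem_range_psiSum μ w) ?_
  induction d using DirectSum.induction_on with
  | zero => exact zero_mem _
  | of l z => exact range_incl_le_range_psiSum μ l ⟨z, rfl⟩
  | add d₁ d₂ h₁ h₂ => simpa using add_mem h₁ h₂

theorem augmentation_toTensorAlgebra {n : ℕ} (t : ⨂[R]^(n + 1) M) :
    augmentation R M (TensorPower.toTensorAlgebra t) = 0 := by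
  induction t using PiTensorProduct.induction_on with
  | smul_tprod r p => simp [augmentation, map_list_prod, List.ofFn_succ]
  | add t₁ t₂ h₁ h₂ => simp [h₁, h₂]

theorem iotaEv_psiSum (D : ⨁ n, ⨂[R]^n M) :
    iotaEv R M μ (psiSum μ D) = TensorAlgebra.ofDirectSum D -
      algebraMap R _ (augmentation R M (TensorAlgebra.ofDirectSum D)) := by
  induction D using DirectSum.induction_on with
  | zero => simp
  | of n t =>
    rw [TensorAlgebra.ofDirectSum_of, ← DirectSum.lof_eq_of R, psiSum, DirectSum.toModule_lof]
    cases n with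
    | zero =>
      obtain ⟨r, rfl⟩ := TensorPower.algebraMap₀.surjective t
      rw [TensorPower.toTensorAlgebra_algebraMap₀, AlgHom.commutes, Algebra.algebraMap_self_apply,
        sub_self]
      exact map_zero _
    | succ n =>
      rw [← LinearMap.comp_apply, iotaEv_comp_psi, augmentation_toTensorAlgebra, map_zero,
        sub_zero]
  | add D₁ D₂ h₁ h₂ => simp only [map_add, h₁, h₂]; abel

theorem psiSum_algebraMap (r : R) : psiSum μ (algebraMap R _ r) = 0 := by
  rw [DirectSum.algebraMap_apply, ← DirectSum.lof_eq_of R, psiSum, DirectSum.toModule_lof]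
  rfl

theorem psiSum_toDirectSum_iotaEv (ω : OmegaEv R M) :
    psiSum μ (TensorAlgebra.toDirectSum (iotaEv R M μ ω)) = ω := by
  obtain ⟨D, rfl⟩ := psiSum_surjective μ ω
  rw [iotaEv_psiSum, map_sub, TensorAlgebra.toDirectSum_ofDirectSum, AlgHom.commutes, map_sub,
    psiSum_algebraMap, sub_zero]

theorem iotaEv_psiSum_toDirectSum (x : TensorAlgebra R M) :
    iotaEv R M μ (psiSum μ (TensorAlgebra.toDirectSum x)) =
      x - algebraMap R _ (augmentation R M x) := by
  rw [iotaEv_psiSum, TensorAlgebra.ofDirectSum_toDirectSum]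

theorem augmentation_iotaEv (ω : OmegaEv R M) : augmentation R M (iotaEv R M μ ω) = 0 := by
  rw [← psiSum_toDirectSum_iotaEv μ ω, iotaEv_psiSum_toDirectSum, map_sub, AlgHom.commutes,
    Algebra.algebraMap_self_apply, sub_self]

end Fedosov

theorem iotaEv_injective_and_range_eq :
    Function.Injective (iotaEv V W μ) ∧
      LinearMap.range (iotaEv V W μ) = LinearMap.ker (augmentation V W).toLinearMap := by
  refine ⟨Function.LeftInverse.injective (g := fun x => psiSum μ (TensorAlgebra.toDirectSum x))
    (psiSum_toDirectSum_iotaEv μ), le_antisymm ?_ fun x hx => ?_⟩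
  · rintro _ ⟨ω, rfl⟩
    exact augmentation_iotaEv μ ω
  · refine ⟨psiSum μ (TensorAlgebra.toDirectSum x), ?_⟩
    rw [iotaEv_psiSum_toDirectSum, show augmentation V W x = 0 from hx, map_zero, sub_zero]

end
end

section
/- Let I ⊆ R be a V-submodule, regarded as a V-submodule of the unitization R⁺ = V ⊕ R. Then for every m ≥ 1, the m-th power of the V-submodule I + V·(π1) of R⁺ equals the internal direct sum (Σ_{j=1}^m π^{m−j} I^j) ⊕ V·(π^m 1); in particular (I + V·π1)^m ∩ R = Σ_{j=1}^m π^{m−j} I^j. -/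
/-!
Since `V·(π1) = π • 1` is central in the idempotent semiring of `V`-submodules of `R⁺`, the
binomial theorem expands `(I + π • 1)^m` into `Σ_{j=0}^m π^{m-j} • I^j`, every binomial
coefficient being `1`.  The term `j = 0` is `V·(π^m 1)`; the others lie in `R`, which meets
`V·1` trivially.
-/

open scoped Pointwise

noncomputable section

variable (V : Type) [CommRing V] (π : V)
variable (R : Type) [NonUnitalRing R] [Module V R] [SMulCommClass V R R] [IsScalarTower V R R]
variable (I : Submodule V R)

/-- `I` regarded as a `V`-submodule of the unitization `R⁺ = V ⊕ R`. -/
def subInr : Submodule V (Unitization V R) := Submodule.map (Unitization.inrHom V V R) I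

namespace Submodule

variable {V : Type*} [CommSemiring V] {A : Type*} [Semiring A] [Algebra V A]

theorem span_singleton_smul_one (c : V) : span V {c • (1 : A)} = c • (1 : Submodule V A) := by
  rw [one_eq_span, smul_span, Set.smul_set_singleton]

theorem add_smul_one_pow (M : Submodule V A) (c : V) (m : ℕ) :
    (M + c • 1) ^ m = ∑ j ∈ Finset.range (m + 1), c ^ (m - j) • M ^ j := by
  rw [((Commute.one_right M).smul_right c).add_pow]
  refine Finset.sum_congr rfl fun j hj => ?_
  rw [natCast_eq_one (Nat.choose_pos (Finset.mem_range_succ_iff.1 hj)).ne', mul_one, smul_pow,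
    one_pow, mul_smul_comm, mul_one]

theorem sup_span_smul_one_pow (M : Submodule V A) (c : V) (m : ℕ) :
    (M ⊔ span V {c • (1 : A)}) ^ m =
      (∑ j ∈ Finset.Icc 1 m, c ^ (m - j) • M ^ j) ⊔ span V {c ^ m • (1 : A)} := by
  rw [span_singleton_smul_one, span_singleton_smul_one, ← add_eq_sup, add_smul_one_pow,
    Nat.range_succ_eq_Icc_zero, ← Finset.insert_Icc_add_one_left_eq_Icc (Nat.zero_le m),
    Finset.sum_insert (by simp), zero_add, add_comm, add_eq_sup, Nat.sub_zero, pow_zero]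

theorem pow_le_of_le_of_mul_le {M N : Submodule V A} (hMN : M ≤ N) (hN : N * N ≤ N) :
    ∀ {n : ℕ}, n ≠ 0 → M ^ n ≤ N
  | 1, _ => by rwa [Submodule.pow_one]
  | n + 2, _ => by
    rw [Submodule.pow_succ]
    exact (mul_le_mul' (pow_le_of_le_of_mul_le hMN hN n.succ_ne_zero) hMN).trans hN

end Submodule

namespace Unitization

variable {V R : Type*} [CommSemiring V] [NonUnitalSemiring R] [Module V R]
  [SMulCommClass V R R] [IsScalarTower V R R]

theorem range_inrHom_mul_le :
    LinearMap.range (inrHom V V R) * LinearMap.range (inrHom V V R) ≤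
      LinearMap.range (inrHom V V R) := by
  rw [Submodule.mul_le]
  rintro _ ⟨a, rfl⟩ _ ⟨b, rfl⟩
  exact ⟨a * b, inr_mul V a b⟩

theorem disjoint_range_inrHom_one :
    Disjoint (LinearMap.range (inrHom V V R)) (1 : Submodule V (Unitization V R)) := by
  rw [Submodule.disjoint_def]
  rintro _ ⟨r, rfl⟩ hr
  obtain ⟨t, ht⟩ := Submodule.mem_one.1 hr
  have hr : r = 0 := by simpa [algebraMap_eq_inl, eq_comm] using congrArg (sndHom V V R) ht
  simp [hr]

end Unitization

theorem sum_smul_pow_subInr_le_range (m : ℕ) :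
    ∑ j ∈ Finset.Icc 1 m, (π ^ (m - j)) • (subInr V R I) ^ j ≤
      LinearMap.range (Unitization.inrHom V V R) := by
  refine Finset.sum_induction _ (· ≤ LinearMap.range (Unitization.inrHom V V R))
    (fun _ _ => add_le) zero_le fun j hj => ?_
  have hI : subInr V R I ≤ LinearMap.range (Unitization.inrHom V V R) := LinearMap.map_le_range
  refine (Submodule.smul_le_self_of_tower _ _).trans ?_
  exact Submodule.pow_le_of_le_of_mul_le hI Unitization.range_inrHom_mul_le
    (Nat.one_le_iff_ne_zero.1 (Finset.mem_Icc.1 hj).1)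

theorem pow_sup_span_pi_one (m : ℕ) :
    ((subInr V R I ⊔ Submodule.span V {π • (1 : Unitization V R)}) ^ m =
        (∑ j ∈ Finset.Icc 1 m, (π ^ (m - j)) • (subInr V R I) ^ j) ⊔
          Submodule.span V {π ^ m • (1 : Unitization V R)}) ∧
      ((∑ j ∈ Finset.Icc 1 m, (π ^ (m - j)) • (subInr V R I) ^ j) ⊓
          Submodule.span V {π ^ m • (1 : Unitization V R)} = ⊥) ∧
      ((subInr V R I ⊔ Submodule.span V {π • (1 : Unitization V R)}) ^ m ⊓
          LinearMap.range (Unitization.inrHom V V R) =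
        ∑ j ∈ Finset.Icc 1 m, (π ^ (m - j)) • (subInr V R I) ^ j) := by
  have hsum := sum_smul_pow_subInr_le_range V π R I m
  have hdisj : LinearMap.range (Unitization.inrHom V V R) ⊓
      Submodule.span V {π ^ m • (1 : Unitization V R)} = ⊥ := by
    rw [Submodule.span_singleton_smul_one, ← disjoint_iff]
    exact Unitization.disjoint_range_inrHom_one.mono_right (Submodule.smul_le_self_of_tower _ _)
  refine ⟨Submodule.sup_span_smul_one_pow _ _ m, ?_, ?_⟩
  · exact eq_bot_iff.2 <| (inf_le_inf_right _ hsum).trans hdisj.le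
  · rw [Submodule.sup_span_smul_one_pow, sup_inf_assoc_of_le _ hsum, inf_comm, hdisj, sup_bot_eq]

end
end

section
/- Let W be a bornological V-module that is bornologically torsionfree. If every bounded subset S ⊆ W is contained in N + πW for some finitely generated V-submodule N ⊆ W (i.e. the quotient bornology on W/πW is fine), then for every m ∈ ℕ, every bounded subset S ⊆ W is contained in N + π^m W for some finitely generated V-submodule N ⊆ W (i.e. the quotient bornology on W/π^m W is fine). -/
/-!
Fineness modulo `a` and modulo `b` gives fineness modulo `a * b`; induct on `m`. Write a bounded
`S` as `S ⊆ N₀ + aW`. The `w` with `a • w ∈ span S + N₀` form a set whose image under `a • ·` is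
bounded, hence which is bounded by torsionfreeness, so it lies in some `N₁ + bW`; then
`S ⊆ (N₀ + a N₁) + abW`.
-/

open scoped Pointwise
open Bornology

namespace Submodule

variable {R M : Type*} [CommRing R] [AddCommGroup M] [Module R M]

theorem le_sup_smul_sup_mul_smul_top {a b : R} {L N₀ N₁ : Submodule R M}
    (hL : L ≤ N₀ ⊔ a • ⊤)
    (hquot : (L ⊔ N₀).comap (DistribSMul.toLinearMap R M a) ≤ N₁ ⊔ b • ⊤) :
    L ≤ N₀ ⊔ a • N₁ ⊔ (a * b) • ⊤ := by
  intro x hx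
  obtain ⟨n, hn, _, ⟨w, -, rfl⟩, hx_eq⟩ := mem_sup.mp (hL hx)
  have hw : a • w ∈ L ⊔ N₀ := by
    rw [show a • w = x - n by rw [← hx_eq]; abel]
    exact sub_mem (mem_sup_left hx) (mem_sup_right hn)
  obtain ⟨y, hy, _, ⟨z, -, rfl⟩, rfl⟩ := mem_sup.mp (hquot hw)
  change n + a • (y + b • z) = x at hx_eq
  rw [← hx_eq, smul_add, smul_smul, ← add_assoc]
  exact add_mem (mem_sup_left (add_mem (mem_sup_left hn)
    (mem_sup_right (smul_mem_pointwise_smul _ _ _ hy))))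
    (mem_sup_right (smul_mem_pointwise_smul _ _ _ mem_top))

end Submodule

section Bornology

variable {R : Type*} (M : Type*) [CommRing R] [AddCommGroup M] [Module R M] [Bornology M]

def IsFineModulo (a : R) : Prop :=
  ∀ S : Set M, IsBounded S → ∃ N : Submodule R M, N.FG ∧ S ⊆ ↑(N ⊔ a • (⊤ : Submodule R M))

variable {M}

theorem isFineModulo_one : IsFineModulo M (1 : R) :=
  fun _ _ ↦ ⟨⊥, Submodule.fg_bot, by simp⟩

variable (hspan : ∀ S : Set M, IsBounded S → IsBounded (Submodule.span R S : Set M))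
include hspan

theorem isBounded_coe_of_fg {N : Submodule R M} (hN : N.FG) : IsBounded (N : Set M) := by
  obtain ⟨t, rfl⟩ := hN
  exact hspan _ t.finite_toSet.isBounded

theorem IsFineModulo.mul {a b : R}
    (htf : ∀ T : Set M, IsBounded ((fun w : M => a • w) '' T) → IsBounded T)
    (ha : IsFineModulo M a) (hb : IsFineModulo M b) : IsFineModulo M (a * b) := by
  intro S hS
  obtain ⟨N₀, hN₀, hSN₀⟩ := ha S hS
  set T := (Submodule.span R S ⊔ N₀).comap (DistribSMul.toLinearMap R M a)
  have hT : IsBounded (T : Set M) := by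
    refine htf _ ((hspan _ (hS.union (isBounded_coe_of_fg hspan hN₀))).subset ?_)
    rintro _ ⟨w, hw, rfl⟩
    rwa [Submodule.span_union, Submodule.span_eq]
  obtain ⟨N₁, hN₁, hTN₁⟩ := hb T hT
  exact ⟨N₀ ⊔ a • N₁, hN₀.sup (hN₁.map (DistribSMul.toLinearMap R M a)), fun s hs ↦
    Submodule.le_sup_smul_sup_mul_smul_top (Submodule.span_le.mpr hSN₀) hTN₁
      (Submodule.subset_span hs)⟩

theorem IsFineModulo.pow {a : R}
    (htf : ∀ T : Set M, IsBounded ((fun w : M => a • w) '' T) → IsBounded T)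
    (ha : IsFineModulo M a) (m : ℕ) : IsFineModulo M (a ^ m) := by
  induction m with
  | zero => simpa using isFineModulo_one
  | succ m ih => simpa [pow_succ'] using ha.mul hspan htf ih

end Bornology

theorem fine_mod_pi_pow_general (V : Type) [CommRing V]
    (π : V)
    (W : Type) [AddCommGroup W] [Module V W] [Bornology W]
    (hmod : ∀ S : Set W, IsBounded S → IsBounded (Submodule.span V S : Set W))
    (htf : ∀ T : Set W, IsBounded ((fun w : W => π • w) '' T) → IsBounded T)
    (hfine : ∀ S : Set W, IsBounded S →
      ∃ N : Submodule V W, N.FG ∧ S ⊆ ↑(N ⊔ π • (⊤ : Submodule V W)))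
    (m : ℕ) :
    ∀ S : Set W, IsBounded S →
      ∃ N : Submodule V W, N.FG ∧ S ⊆ ↑(N ⊔ π ^ m • (⊤ : Submodule V W)) :=
  IsFineModulo.pow hmod htf hfine m

theorem fine_mod_pi_pow (V : Type) [CommRing V] [IsDomain V] [IsDiscreteValuationRing V]
    (π : V) (hπ : Irreducible π)
    (W : Type) [AddCommGroup W] [Module V W] [Bornology W]
    (hmod : ∀ S : Set W, IsBounded S → IsBounded (Submodule.span V S : Set W))
    (hinj : Function.Injective fun w : W => π • w)
    (htf : ∀ T : Set W, IsBounded ((fun w : W => π • w) '' T) → IsBounded T)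
    (hfine : ∀ S : Set W, IsBounded S →
      ∃ N : Submodule V W, N.FG ∧ S ⊆ ↑(N ⊔ π • (⊤ : Submodule V W)))
    (m : ℕ) :
    ∀ S : Set W, IsBounded S →
      ∃ N : Submodule V W, N.FG ∧ S ⊆ ↑(N ⊔ π ^ m • (⊤ : Submodule V W)) :=
  fine_mod_pi_pow_general V π W hmod htf hfine m
end

section
/- Let B be a set, A a V-module with π·A = 0, and ρ : C₀(B,V) → A a V-linear map whose range is a finitely generated V-submodule of A. Then there exist a finite subset X ⊆ A and a V-linear map f : C₀(B,V) → V[X] such that e_X ∘ f = ρ. -/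
/-!
Since `π • A = 0`, a linear map `C₀(B,V) → A` is determined by its values on the indicator
functions `δ_b`: every `h` is the finite sum `∑ h(b) δ_b` over the `b` with `h(b) ∉ πV`, plus
`π` times an element of `C₀(B,V)`. Choose `u_b ∈ V[X]` with `e_X(u_b) = ρ(δ_b)`. Because
`h(b) → 0`, the series `∑_b h(b) u_b` converges `π`-adically in the complete module `V[X]`;
its sum `f(h)` is linear in `h` with `f(δ_b) = u_b`, so `e_X ∘ f` and `ρ` agree on every `δ_b`.
-/

/-- `C₀(B,V)`: functions `B → V` tending to zero `π`-adically. -/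
def Czero (V : Type) [CommRing V] (π : V) (B : Type) : Submodule V (B → V) where
  carrier := {h | ∀ n : ℕ, {b : B | h b ∉ Ideal.span {π ^ n}}.Finite}
  zero_mem' := by
    intro n
    have : {b : B | (0 : B → V) b ∉ Ideal.span {π ^ n}} = ∅ := by
      ext b
      simp [Ideal.zero_mem]
    rw [this]
    exact Set.finite_empty
  add_mem' := by
    intro h g hh hg n
    refine ((hh n).union (hg n)).subset ?_
    intro b hb
    by_contra hc
    simp only [Set.mem_union, Set.mem_setOf_eq, not_or, not_not] at hc
    exact hb (by simpa using Ideal.add_mem _ hc.1 hc.2)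
  smul_mem' := by
    intro c h hh n
    refine (hh n).subset ?_
    intro b hb
    by_contra hc
    simp only [Set.mem_setOf_eq, not_not] at hc
    exact hb (by simpa [smul_eq_mul] using Ideal.mul_mem_left _ c hc)

noncomputable section

namespace Czero

variable {V : Type} [CommRing V] {π : V} {B : Type}

def supportModPow (h : Czero V π B) (n : ℕ) : Finset B := (h.2 n).toFinset

theorem mem_supportModPow {h : Czero V π B} {n : ℕ} {b : B} :
    b ∈ supportModPow h n ↔ (h : B → V) b ∉ Ideal.span {π ^ n} :=
  Set.Finite.mem_toFinset _

theorem apply_mem_span_of_notMem_supportModPow {h : Czero V π B} {n : ℕ} {b : B}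
    (hb : b ∉ supportModPow h n) : (h : B → V) b ∈ Ideal.span {π ^ n} :=
  not_not.mp (mt mem_supportModPow.mpr hb)

theorem supportModPow_mono (h : Czero V π B) {k n : ℕ} (hkn : k ≤ n) :
    supportModPow h k ⊆ supportModPow h n := fun _ hb ↦
  mem_supportModPow.mpr fun hn ↦ mem_supportModPow.mp hb <|
    Ideal.span_singleton_le_span_singleton.mpr (pow_dvd_pow π hkn) hn

theorem exists_eq_pi_smul [IsDomain V] (hπ : π ≠ 0) (h : Czero V π B)
    (hh : ∀ b, (h : B → V) b ∈ Ideal.span {π}) : ∃ g : Czero V π B, h = π • g := by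
  choose c hc using fun b ↦ Ideal.mem_span_singleton'.mp (hh b)
  refine ⟨⟨c, fun n ↦ (h.2 (n + 1)).subset fun b hb hcb ↦ hb ?_⟩, ?_⟩
  · obtain ⟨t, ht⟩ := Ideal.mem_span_singleton'.mp hcb
    refine Ideal.mem_span_singleton'.mpr ⟨t, mul_right_cancel₀ hπ ?_⟩
    rw [hc b, ← ht, pow_succ, mul_assoc]
  · ext b
    simp [← hc b, mul_comm]

section single

variable [DecidableEq B]

def single (b : B) : Czero V π B :=
  ⟨Pi.single b 1, fun _ ↦ (Set.finite_singleton b).subset fun b' hb' ↦ by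
    by_contra hne
    exact hb' (by rw [Pi.single_eq_of_ne hne]; exact Ideal.zero_mem _)⟩

theorem coe_single (b : B) : ((single b : Czero V π B) : B → V) = Pi.single b 1 := rfl

theorem supportModPow_single_subset (b : B) (n : ℕ) :
    supportModPow (single b : Czero V π B) n ⊆ {b} := fun b' hb' ↦ by
  by_contra hne
  refine mem_supportModPow.mp hb' ?_
  rw [coe_single, Pi.single_eq_of_ne (Finset.mem_singleton.not.mp hne)]
  exact Ideal.zero_mem _

theorem coe_sum_smul_single_apply (h : Czero V π B) (U : Finset B) (b : B) :
    ((∑ b' ∈ U, (h : B → V) b' • single b' : Czero V π B) : B → V) b =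
      if b ∈ U then (h : B → V) b else 0 := by
  simp [coe_single, Pi.single_apply]

theorem exists_eq_sum_smul_single_add_pi_smul [IsDomain V] (hπ : π ≠ 0) (h : Czero V π B) :
    ∃ g : Czero V π B, h = ∑ b ∈ supportModPow h 1, (h : B → V) b • single b + π • g := by
  obtain ⟨g, hg⟩ := exists_eq_pi_smul hπ (h - ∑ b ∈ supportModPow h 1, (h : B → V) b • single b)
    fun b ↦ by
      rw [Submodule.coe_sub, Pi.sub_apply, coe_sum_smul_single_apply]
      split_ifs with hb
      · simp
      · simpa using apply_mem_span_of_notMem_supportModPow hb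
  exact ⟨g, eq_add_of_sub_eq' hg⟩

theorem linearMap_ext [IsDomain V] (hπ : π ≠ 0) {A : Type} [AddCommGroup A] [Module V A]
    (hA : ∀ a : A, π • a = 0) {φ ψ : Czero V π B →ₗ[V] A}
    (hφψ : ∀ b, φ (single b) = ψ (single b)) : φ = ψ := by
  ext h
  obtain ⟨g, hg⟩ := exists_eq_sum_smul_single_add_pi_smul hπ h
  rw [hg]
  simp [hA, hφψ]

end single

section sumSMul

variable {M : Type} [AddCommGroup M] [Module V M]

theorem mk_sum_smul_eq_of_supportModPow_subset (m : B → M) {h : Czero V π B} {n : ℕ}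
    {U : Finset B} (hU : supportModPow h n ⊆ U) :
    (Submodule.Quotient.mk (∑ b ∈ U, (h : B → V) b • m b) :
        M ⧸ (Ideal.span {π} ^ n • ⊤ : Submodule V M)) =
      Submodule.Quotient.mk (∑ b ∈ supportModPow h n, (h : B → V) b • m b) := by
  classical
  rw [Submodule.Quotient.eq, ← Finset.sum_sdiff_eq_sub hU]
  refine Submodule.sum_mem _ fun b hb ↦ Submodule.smul_mem_smul ?_ Submodule.mem_top
  rw [Ideal.span_singleton_pow]
  exact apply_mem_span_of_notMem_supportModPow (Finset.mem_sdiff.mp hb).2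

variable (π) in
def sumSMulModPow (m : B → M) (n : ℕ) :
    Czero V π B →ₗ[V] M ⧸ (Ideal.span {π} ^ n • ⊤ : Submodule V M) where
  toFun h := Submodule.Quotient.mk (∑ b ∈ supportModPow h n, (h : B → V) b • m b)
  map_add' h g := by
    classical
    let U := supportModPow h n ∪ supportModPow g n ∪ supportModPow (h + g) n
    rw [← mk_sum_smul_eq_of_supportModPow_subset m (U := U) (by intro; simp +contextual [U]),
      ← mk_sum_smul_eq_of_supportModPow_subset m (U := U) (h := h) (by intro; simp +contextual [U]),
      ← mk_sum_smul_eq_of_supportModPow_subset m (U := U) (h := g) (by intro; simp +contextual [U]),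
      ← Submodule.Quotient.mk_add, ← Finset.sum_add_distrib]
    simp [add_smul]
  map_smul' c h := by
    classical
    let U := supportModPow h n ∪ supportModPow (c • h) n
    rw [← mk_sum_smul_eq_of_supportModPow_subset m (U := U) (by intro; simp +contextual [U]),
      ← mk_sum_smul_eq_of_supportModPow_subset m (U := U) (h := h) (by intro; simp +contextual [U]),
      RingHom.id_apply, ← Submodule.Quotient.mk_smul, Finset.smul_sum]
    simp [mul_smul]

theorem factorPow_comp_sumSMulModPow (m : B → M) {k n : ℕ} (hkn : k ≤ n) :
    Submodule.factorPow (Ideal.span {π}) M hkn ∘ₗ sumSMulModPow π m n = sumSMulModPow π m k := by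
  ext h
  exact mk_sum_smul_eq_of_supportModPow_subset m (supportModPow_mono h hkn)

variable [IsAdicComplete (Ideal.span {π}) M]

variable (π) in
/-- The `π`-adically convergent sum `h ↦ ∑ b, h b • m b`. -/
def sumSMul (m : B → M) : Czero V π B →ₗ[V] M :=
  IsAdicComplete.lift _ (sumSMulModPow π m) (factorPow_comp_sumSMulModPow m)

theorem sumSMul_single [DecidableEq B] (m : B → M) (b : B) : sumSMul π m (single b) = m b := by
  refine (IsHausdorff.eq_iff_smodEq (I := Ideal.span {π})).mpr fun n ↦ ?_
  rw [SModEq, sumSMul, IsAdicComplete.mk_lift]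
  change _ = Submodule.Quotient.mk _
  rw [sumSMulModPow, LinearMap.coe_mk, AddHom.coe_mk,
    ← mk_sum_smul_eq_of_supportModPow_subset m (supportModPow_single_subset b n)]
  simp [coe_single]

end sumSMul

end Czero

end

theorem czero_lift_through_free_general
    (V : Type) [CommRing V] [IsDomain V]
    (π : V) (hπ : Irreducible π) [IsAdicComplete (Ideal.span {π}) V]
    (B : Type) (A : Type) [AddCommGroup A] [Module V A] (hA : ∀ a : A, π • a = 0)
    (ρ : Czero V π B →ₗ[V] A) (hfg : (LinearMap.range ρ).FG) :
    ∃ (X : Finset A) (f : Czero V π B →ₗ[V] (X → V)),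
      (Fintype.linearCombination V (fun x : X => (x : A))).comp f = ρ := by
  classical
  obtain ⟨X, hX⟩ := hfg
  set e := Fintype.linearCombination V (fun x : X => (x : A))
  have hlift (b : B) : ∃ u : X → V, e u = ρ (Czero.single b) :=
    LinearMap.mem_range.mp (by simp [e, Fintype.range_linearCombination, hX])
  choose u hu using hlift
  refine ⟨X, LinearMap.pi fun x ↦ Czero.sumSMul π fun b ↦ u b x,
    Czero.linearMap_ext hπ.ne_zero hA fun b ↦ ?_⟩
  rw [← hu b, LinearMap.comp_apply]
  congr 1
  ext x
  exact Czero.sumSMul_single _ b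

theorem czero_lift_through_free
    (V : Type) [CommRing V] [IsDomain V] [IsDiscreteValuationRing V]
    (π : V) (hπ : Irreducible π) [IsAdicComplete (Ideal.span {π}) V]
    (B : Type) (A : Type) [AddCommGroup A] [Module V A] (hA : ∀ a : A, π • a = 0)
    (ρ : Czero V π B →ₗ[V] A) (hfg : (LinearMap.range ρ).FG) :
    ∃ (X : Finset A) (f : Czero V π B →ₗ[V] (X → V)),
      (Fintype.linearCombination V (fun x : X => (x : A))).comp f = ρ :=
  czero_lift_through_free_general V π hπ B A hA ρ hfg
end

section
/- Suppose given functions a : I → J and b : J → I, and R-linear maps φ_i : M_i → N_{a(i)} for i ∈ I and ψ_α : N_α → M_{b(α)} for α ∈ J, such that: (1) for every i ∈ I there exists j ∈ I with j ≥ i and j ≥ b(a(i)) such that f_{b(a(i)), j} ∘ ψ_{a(i)} ∘ φ_i = f_{ij}; and (2) for all i ≤ k in I there exists α ∈ J with α ≥ a(i) and α ≥ a(k) such that n_{a(k), α} ∘ φ_k ∘ f_{ik} = n_{a(i), α} ∘ φ_i. (These hypotheses encode that the inductive system (M_i) is isomorphic, as an inductive system, to the system (N_α) whose structure maps are injective.)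 Then for every i ∈ I there is j ≥ i such that ker f_{ij} = ker f_{ik} for all k ≥ j. -/
/-!
Statement 13.  `(M i, f i j)` is an inductive system of `R`-modules over a directed
preorder `I`, and `(N α, n α β)` an inductive system over a directed preorder `J` with
injective structure maps.  Given `a : I → J`, `b : J → I` and linear maps
`φ i : M i → N (a i)`, `ψ α : N α → M (b α)` such that (1) for every `i` there is
`j ≥ i, b(a(i))` with `f_{b(a(i)),j} ∘ ψ_{a(i)} ∘ φ_i = f_{ij}` and (2) for all `i ≤ k`
there is `α ≥ a i, a k` with `n_{a(k),α} ∘ φ_k ∘ f_{ik} = n_{a(i),α} ∘ φ_i` (encoding that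
`(M i)` is isomorphic, as an inductive system, to a system with injective structure maps),
then for every `i` there is `j ≥ i` such that `ker f_{ij} = ker f_{ik}` for all `k ≥ j`.
-/

theorem inductive_system_kernels_stabilise
    (R : Type) [CommRing R]
    (I : Type) [Preorder I] [IsDirected I (· ≤ ·)]
    (M : I → Type) [∀ i, AddCommGroup (M i)] [∀ i, Module R (M i)]
    (f : ∀ i j, i ≤ j → (M i →ₗ[R] M j))
    (hfid : ∀ i (x : M i), f i i le_rfl x = x)
    (hfcomp : ∀ i j k (hij : i ≤ j) (hjk : j ≤ k) (x : M i),
      f j k hjk (f i j hij x) = f i k (hij.trans hjk) x)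
    (J : Type) [Preorder J] [IsDirected J (· ≤ ·)]
    (N : J → Type) [∀ α, AddCommGroup (N α)] [∀ α, Module R (N α)]
    (n : ∀ α β, α ≤ β → (N α →ₗ[R] N β))
    (hnid : ∀ α (y : N α), n α α le_rfl y = y)
    (hncomp : ∀ α β γ (hαβ : α ≤ β) (hβγ : β ≤ γ) (y : N α),
      n β γ hβγ (n α β hαβ y) = n α γ (hαβ.trans hβγ) y)
    (hninj : ∀ α β (hαβ : α ≤ β), Function.Injective (n α β hαβ))
    (a : I → J) (b : J → I)
    (φ : ∀ i, M i →ₗ[R] N (a i)) (ψ : ∀ α, N α →ₗ[R] M (b α))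
    (h1 : ∀ i, ∃ j, ∃ hij : i ≤ j, ∃ hbj : b (a i) ≤ j, ∀ x : M i,
      f (b (a i)) j hbj (ψ (a i) (φ i x)) = f i j hij x)
    (h2 : ∀ i k (hik : i ≤ k), ∃ α, ∃ hα1 : a i ≤ α, ∃ hα2 : a k ≤ α, ∀ x : M i,
      n (a k) α hα2 (φ k (f i k hik x)) = n (a i) α hα1 (φ i x)) :
    ∀ i, ∃ j, ∃ hij : i ≤ j, ∀ k (hjk : j ≤ k),
      LinearMap.ker (f i j hij) = LinearMap.ker (f i k (hij.trans hjk)) := by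
  intro i
  obtain ⟨j, hij, hbj, hjeq⟩ := h1 i
  refine ⟨j, hij, fun k hjk => le_antisymm ?_ ?_⟩
  · intro x hx
    simp only [LinearMap.mem_ker] at hx ⊢
    rw [← hfcomp i j k hij hjk, hx, map_zero]
  · intro x hx
    simp only [LinearMap.mem_ker] at hx ⊢
    obtain ⟨α, hα1, hα2, heq⟩ := h2 i k (hij.trans hjk)
    have hφ : φ i x = 0 := by
      apply hninj (a i) α hα1
      rw [← heq x, hx, map_zero, map_zero, map_zero]
    rw [← hjeq x, hφ, map_zero, map_zero]
end
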